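/- arXiv:1202.3253 — 4 statements merged into one kernel-verified Lean document; each statement's English description precedes it below -/
import Mathlib

section
/- If two databases D1 and D2 differ in the sensitive values of exactly two tuples (the values being swapped between them), the randomization keeps each original value with probability p and outputs each other value with probability q, and the output D' agrees with D1 on both of these tuples, then Pr[A(D1)=D'] / Pr[A(D2)=D'] = p^2/q^2; in particular if p ≠ q the mechanism is not ℓ'-diverted zero-differential. -/
/-- If `D2` is obtained from `D1` by swapping the (distinct) sensitive values of two tuples
`a` and `b`, the per-tuple randomization keeps the original value with probability `p` and
outputs each other value with probability `q`, and the output `D'` agrees with `D1` on both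
tuples, then `Pr[A(D1)=D'] / Pr[A(D2)=D'] = p²/q²`; in particular if `p ≠ q` the two
probabilities differ, so the mechanism is not ℓ'-diverted zero-differential. -/
theorem swap_pair_ratio
    (N m : ℕ) (S : Type) [Fintype S] [DecidableEq S] (hcard : Fintype.card S = m)
    (p q : ℝ) (hp : 0 < p) (hq : 0 < q) (hqdef : q = (1 - p) / ((m : ℝ) - 1))
    (trans : S → S → ℝ) (htrans : ∀ a b, trans a b = if b = a then p else q)
    (D1 D2 D' : Fin N → S) (a b : Fin N) (hab : a ≠ b)
    (hne : D1 a ≠ D1 b)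
    (hswap1 : D2 a = D1 b) (hswap2 : D2 b = D1 a)
    (hoth : ∀ i, i ≠ a → i ≠ b → D2 i = D1 i)
    (hD'a : D' a = D1 a) (hD'b : D' b = D1 b) :
    (∏ i, trans (D1 i) (D' i)) / (∏ i, trans (D2 i) (D' i)) = p ^ 2 / q ^ 2 ∧
    (p ≠ q → (∏ i, trans (D1 i) (D' i)) ≠ ∏ i, trans (D2 i) (D' i)) := by
  classical
  set f1 : Fin N → ℝ := fun i => trans (D1 i) (D' i) with hf1
  set f2 : Fin N → ℝ := fun i => trans (D2 i) (D' i) with hf2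
  set R : ℝ := ∏ i ∈ (Finset.univ.erase a).erase b, f1 i with hR
  have hbmem : b ∈ Finset.univ.erase a := Finset.mem_erase.2 ⟨hab.symm, Finset.mem_univ b⟩
  have hsplit1 : ∏ i, f1 i = f1 a * (f1 b * R) := by
    rw [hR, Finset.mul_prod_erase _ _ hbmem, Finset.mul_prod_erase _ _ (Finset.mem_univ a)]
  have heq : ∀ i ∈ (Finset.univ.erase a).erase b, f2 i = f1 i := by
    intro i hi
    have hib : i ≠ b := (Finset.mem_erase.1 hi).1
    have hia : i ≠ a := (Finset.mem_erase.1 (Finset.mem_erase.1 hi).2).1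
    simp [hf1, hf2, hoth i hia hib]
  have hsplit2 : ∏ i, f2 i = f2 a * (f2 b * R) := by
    rw [hR, ← Finset.prod_congr rfl heq, Finset.mul_prod_erase _ _ hbmem,
      Finset.mul_prod_erase _ _ (Finset.mem_univ a)]
  have hf1a : f1 a = p := by simp [hf1, htrans, hD'a]
  have hf1b : f1 b = p := by simp [hf1, htrans, hD'b]
  have hf2a : f2 a = q := by simp [hf2, htrans, hD'a, hswap1, hne]
  have hf2b : f2 b = q := by
    have : D1 b ≠ D1 a := fun h => hne h.symm
    simp [hf2, htrans, hD'b, hswap2, this]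
  have hRpos : 0 < R := by
    refine Finset.prod_pos fun i _ => ?_
    simp only [hf1]
    rw [htrans]
    split <;> [exact hp; exact hq]
  have hRne : R ≠ 0 := ne_of_gt hRpos
  have hqne : q ≠ 0 := ne_of_gt hq
  constructor
  · rw [hsplit1, hsplit2, hf1a, hf1b, hf2a, hf2b]
    field_simp
  · intro hpq hcontra
    rw [hsplit1, hsplit2, hf1a, hf1b, hf2a, hf2b] at hcontra
    have : p * p = q * q := by
      have := mul_right_cancel₀ hRne (by linarith [hcontra] : p * p * R = q * q * R)
      exact this
    have : p = q := by nlinarith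
    exact hpq this
end

section
/- Mechanism A' with p = q = 1/ℓ' satisfies ℓ'-diverted zero-differential privacy: for any database D1 and any tuple t in D1, letting P(t) be the decoy group of t under the deterministic partitioning, each of the ℓ'-1 databases D2 obtained by swapping the non-sensitive values of t with another member of P(t) satisfies Pr[A'(D1)=D'] = Pr[A'(D2)=D'] for all outputs D'. -/
/-- The probability that mechanism A' (with `p = q = 1/ℓ'`) maps database `D` to the
published (randomly shuffled) dataset `D'`: each tuple keeps its non-sensitive record and
publishes a value uniformly from the `ℓ'` decoy values of its group, and the resulting
tuples are shuffled by a uniformly random permutation. -/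
noncomputable def probA' (N ℓ' : ℕ) {R S : Type} [DecidableEq R] [DecidableEq S]
    (part : (Fin N → S) → Fin N → Finset S) (D D' : Fin N → R × S) : ℝ :=
  (∑ σ : Equiv.Perm (Fin N), ∏ i,
      (if (D' (σ i)).1 = (D i).1 ∧ (D' (σ i)).2 ∈ part (fun j => (D j).2) i
        then (1 : ℝ) / ℓ' else 0)) / (Nat.factorial N)

/-- Mechanism A' with `p = q = 1/ℓ'` satisfies ℓ'-diverted zero-differential privacy:
for any database `D1` and tuple `t`, every database `D2` obtained by swapping the
non-sensitive values of `t` with another member `t̆` of its decoy group `P(t)` (a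
neighboring database with respect to `t`) satisfies `Pr[A'(D1)=D'] = Pr[A'(D2)=D']`
for all outputs `D'`.  (There are `ℓ' - 1` such choices of `t̆`, hence `ℓ' - 1` such
neighboring databases.) -/
theorem mechanismA'_ell_diverted_zero_differential
    (N ℓ' : ℕ) (hℓ : 0 < ℓ') (R S : Type) [DecidableEq R] [DecidableEq S]
    (part : (Fin N → S) → Fin N → Finset S)
    (hmem : ∀ sv i, sv i ∈ part sv i)
    (hcard : ∀ sv i, (part sv i).card = ℓ')
    (hdistinct : ∀ sv i j, part sv i = part sv j → sv i = sv j → i = j)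
    (D1 : Fin N → R × S) (t tb : Fin N) (htb : tb ≠ t)
    (hgroup : part (fun j => (D1 j).2) tb = part (fun j => (D1 j).2) t)
    (D2 : Fin N → R × S)
    (hD2t : D2 t = ((D1 tb).1, (D1 t).2))
    (hD2tb : D2 tb = ((D1 t).1, (D1 tb).2))
    (hD2 : ∀ i, i ≠ t → i ≠ tb → D2 i = D1 i) :
    ∀ D' : Fin N → R × S, probA' N ℓ' part D1 D' = probA' N ℓ' part D2 D' := by
  intro D'
  unfold probA'
  have hsv : (fun j => (D2 j).2) = (fun j => (D1 j).2) := by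
    funext j
    by_cases hjt : j = t
    · subst hjt; rw [hD2t]
    · by_cases hjtb : j = tb
      · subst hjtb; rw [hD2tb]
      · rw [hD2 j hjt hjtb]
  rw [hsv]
  congr 1
  have hP : ∀ i, part (fun j => (D1 j).2) (Equiv.swap t tb i)
      = part (fun j => (D1 j).2) i := by
    intro i
    by_cases hit : i = t
    · subst hit; rw [Equiv.swap_apply_left, hgroup]
    · by_cases hitb : i = tb
      · subst hitb; rw [Equiv.swap_apply_right, hgroup]
      · rw [Equiv.swap_apply_of_ne_of_ne hit hitb]
  have hfst : ∀ i, (D2 (Equiv.swap t tb i)).1 = (D1 i).1 := by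
    intro i
    by_cases hit : i = t
    · subst hit; rw [Equiv.swap_apply_left, hD2tb]
    · by_cases hitb : i = tb
      · subst hitb; rw [Equiv.swap_apply_right, hD2t]
      · rw [Equiv.swap_apply_of_ne_of_ne hit hitb, hD2 i hit hitb]
  refine Fintype.sum_equiv (Equiv.mulRight (Equiv.swap t tb)) _ _ (fun σ => ?_)
  refine Fintype.prod_equiv (Equiv.swap t tb) _ _ (fun i => ?_)
  simp only [Equiv.coe_mulRight, Equiv.Perm.mul_apply, Equiv.swap_apply_self, hP, hfst]
end

section
/- If a dataset of N tuples (N a multiple of ℓ') is eligible, i.e., the maximum frequency of any sensitive value is at most N/ℓ', then there exists a partition of the tuples into N/ℓ' groups of size ℓ' such that within each group all ℓ' sensitive values are distinct. -/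
/-!
Sort the tuples by sensitive value, so that equal values occupy a block of at most `g`
consecutive positions, and put position `m` into group `m mod g`. Two positions in one group
differ by a multiple of `g`, so they cannot lie in the same block.
-/

open Finset

lemma Fin.card_filter_modNat_eq (m n : ℕ) (k : Fin n) :
    #{i : Fin (m * n) | i.modNat = k} = m := by
  rw [card_equiv finProdFinEquiv.symm (t := univ ×ˢ {k}) (by simp [eq_comm])]
  simp

lemma Fin.exists_perm_ordConnected_fibers {S : Type*} {n : ℕ} (f : Fin n → S) :
    ∃ σ : Equiv.Perm (Fin n), ∀ s, ((f ∘ σ) ⁻¹' {s}).OrdConnected := by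
  let _ : LinearOrder S := WellOrderingRel.isWellOrder.linearOrder
  exact ⟨Tuple.sort f, fun s => Set.ordConnected_singleton.preimage_mono (Tuple.monotone_sort f)⟩

lemma Fin.eq_of_modNat_eq_of_ordConnected_fibers {S : Type*} [DecidableEq S] {m g : ℕ}
    {t : Fin (m * g) → S} (hconn : ∀ s, (t ⁻¹' {s}).OrdConnected)
    (hfib : ∀ s, #{i | t i = s} ≤ g) {i j : Fin (m * g)} (hmod : i.modNat = j.modNat)
    (ht : t i = t j) : i = j := by
  wlog hij : i ≤ j generalizing i j
  · exact (this hmod.symm ht.symm (le_of_not_ge hij)).symm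
  have hIcc : Icc i j ⊆ ({k | t k = t i} : Finset _) := fun k hk => by
    simpa using (hconn (t i)).out rfl ht.symm (Finset.mem_Icc.mp hk)
  have hlt : (j : ℕ) - i < g := by
    have := (card_le_card hIcc).trans (hfib (t i))
    rw [Fin.card_Icc] at this
    omega
  have hmodEq : (i : ℕ) ≡ j [MOD g] := congrArg Fin.val hmod
  exact Fin.ext (hmodEq.eq_of_abs_lt (by rw [abs_lt]; omega))

theorem eligible_partition_exists_general
    (N ℓ' g : ℕ) (hN : N = g * ℓ')
    (S : Type) [DecidableEq S] (sv : Fin N → S)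
    (helig : ∀ s : S, (Finset.univ.filter (fun i => sv i = s)).card ≤ g) :
    ∃ P : Fin N → Fin g,
      (∀ k : Fin g, (Finset.univ.filter (fun i => P i = k)).card = ℓ') ∧
      (∀ i j, P i = P j → sv i = sv j → i = j) := by
  obtain rfl : N = ℓ' * g := hN.trans (mul_comm _ _)
  obtain ⟨σ, hconn⟩ := Fin.exists_perm_ordConnected_fibers sv
  refine ⟨fun i => (σ.symm i).modNat, fun k => ?_, fun i j hP hsv => ?_⟩
  · rw [card_equiv σ.symm (t := {i | i.modNat = k}) (by simp)]
    exact Fin.card_filter_modNat_eq ℓ' g k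
  · have hfib (s : S) : #{i | (sv ∘ σ) i = s} ≤ g :=
      (card_equiv σ (by simp)).trans_le (helig s)
    exact σ.symm.injective <| Fin.eq_of_modNat_eq_of_ordConnected_fibers hconn hfib hP
      (by simpa using hsv)

/-- If a dataset of `N = g·ℓ'` tuples is eligible (each sensitive value occurs at most
`N/ℓ' = g` times), then the tuples can be partitioned into `g` groups of size `ℓ'` such
that within each group all `ℓ'` sensitive values are distinct. -/
theorem eligible_partition_exists
    (N ℓ' g : ℕ) (hN : N = g * ℓ') (hℓ : 0 < ℓ')
    (S : Type) [DecidableEq S] (sv : Fin N → S)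
    (helig : ∀ s : S, (Finset.univ.filter (fun i => sv i = s)).card ≤ g) :
    ∃ P : Fin N → Fin g,
      (∀ k : Fin g, (Finset.univ.filter (fun i => P i = k)).card = ℓ') ∧
      (∀ i j, P i = P j → sv i = sv j → i = j) :=
  eligible_partition_exists_general N ℓ' g hN S sv helig
end

section
/- If the count of value s has an (ε̄, T_P) privacy guarantee (the estimator's relative error exceeds ε̄ with probability at least T_P), and the randomization of the sensitive attribute is independent of the non-sensitive attributes, then for any non-sensitive predicate P, at least one of the counts (P, s) and (¬P, s) has relative-error-exceeds-ε̄ probability at least T_P; in particular, if by symmetry/exchangeability both have equal such probability, then each count (P, s) also has an (ε̄, T_P) privacy guarantee. -/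
open MeasureTheory

/-- If the count of value `s` (with `f_s = c₁ + c₂`) has an `(ε̄, T_P)` privacy guarantee —
the relative error of the estimator `ĉ₁ + ĉ₂` of `f_s` exceeds `ε̄` with probability at
least `T_P` — then at least one of the counts `(P, s)` and `(¬P, s)` has its relative
error exceed `ε̄` with probability at least `T_P/2`:
`max(Pr[|ĉ₁-c₁| ≥ ε̄c₁], Pr[|ĉ₂-c₂| ≥ ε̄c₂]) ≥ T_P/2`. -/
theorem subcount_privacy_guarantee
    {Ω : Type*} [MeasurableSpace Ω] (μ : Measure Ω) [IsProbabilityMeasure μ]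
    (c1hat c2hat : Ω → ℝ) (c1 c2 fs ε : ℝ)
    (hc1 : 0 ≤ c1) (hc2 : 0 ≤ c2) (hsum : c1 + c2 = fs) (hε : 0 < ε)
    (TP : ENNReal)
    (hTP : TP ≤ μ {ω | ε * fs ≤ |c1hat ω + c2hat ω - fs|}) :
    TP / 2 ≤ max (μ {ω | ε * c1 ≤ |c1hat ω - c1|}) (μ {ω | ε * c2 ≤ |c2hat ω - c2|}) := by
  have hsub : {ω | ε * fs ≤ |c1hat ω + c2hat ω - fs|} ⊆
      {ω | ε * c1 ≤ |c1hat ω - c1|} ∪ {ω | ε * c2 ≤ |c2hat ω - c2|} := by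
    intro ω hω
    by_contra h
    simp only [Set.mem_union, Set.mem_setOf_eq, not_or, not_le] at h
    obtain ⟨h1, h2⟩ := h
    have : |c1hat ω + c2hat ω - fs| < ε * fs := by
      have : c1hat ω + c2hat ω - fs = (c1hat ω - c1) + (c2hat ω - c2) := by
        rw [← hsum]; ring
      rw [this]
      calc |(c1hat ω - c1) + (c2hat ω - c2)| ≤ |c1hat ω - c1| + |c2hat ω - c2| :=
            abs_add_le _ _
        _ < ε * c1 + ε * c2 := add_lt_add h1 h2
        _ = ε * fs := by rw [← hsum]; ring
    exact absurd hω (not_le.mpr this)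
  have h1 : TP ≤ μ {ω | ε * c1 ≤ |c1hat ω - c1|} + μ {ω | ε * c2 ≤ |c2hat ω - c2|} :=
    hTP.trans ((measure_mono hsub).trans (measure_union_le _ _))
  have h2 : μ {ω | ε * c1 ≤ |c1hat ω - c1|} + μ {ω | ε * c2 ≤ |c2hat ω - c2|} ≤
      2 * max (μ {ω | ε * c1 ≤ |c1hat ω - c1|}) (μ {ω | ε * c2 ≤ |c2hat ω - c2|}) := by
    rw [two_mul]
    exact add_le_add (le_max_left _ _) (le_max_right _ _)
  rw [ENNReal.div_le_iff_le_mul (by simp) (by simp)]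
  calc TP ≤ _ := h1
    _ ≤ _ := h2
    _ = _ := by rw [mul_comm]
end
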